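/- For η ∈ ℝ consider the 2π-periodic Riccati equation u' = (sin t − 2)u² + η − cos t, and let γ_η(t) := (sin t − 2)(η − cos t) − 3cos²t/(4(sin t − 2)²) − sin t/(2(sin t − 2)) be the function obtained from it by the normalizing change of variables, with mean-centered part γ̂_η. Let μ*(η) denote the unique real number such that the equation x' = x² + γ̂_η(t) + μ has exactly one 2π-periodic solution precisely when μ = μ*(η) (two when μ < μ*(η), none when μ > μ*(η)). Then the function η ↦ μ*(η) is differentiable on ℝ and concave (its graph lies below each of its tangent lines). -/

import Mathlib

/-!
At the critical value `μ = μ*(η)` the periodic solution `z_η` is unique, and this forces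
`∫ z_η = 0`: otherwise the linearised equation `y' = -2 z_η y - 1` has a periodic solution `y`
without zeros, and `z_η + 1 / y` is a second periodic solution. Hence the integrating factor
`E = exp (-2 ∫₀ᵗ z_η)` is periodic, and for every periodic solution `φ` at `(η', μ)`,
integrating `((φ - z_η) E)'` over a period gives
  `∫ (φ - z_η)² E = (∫ E) (μ*(η) + p(η) (η' - η) - μ)`,  with `p(η) = -∫ sin · E / ∫ E`.
Since solutions exist for every `μ < μ*(η')`, all the lines `η' ↦ μ*(η) + p(η) (η' - η)` lie
above `μ*`, so `μ*` is concave, hence continuous. With `φ = z_η'` the same identity shows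
`z_η' → z_η` in weighted `L²`, so `p` is continuous, and a function trapped below tangent
lines with continuous slopes is differentiable.
-/

open Real

/-- The function `γ_η` obtained from `u' = (sin t − 2)u² + η − cos t` by the normalizing
change of variables. -/
noncomputable def gammaEta (η : ℝ) : ℝ → ℝ := fun t =>
  (Real.sin t - 2) * (η - Real.cos t) - 3 * Real.cos t ^ 2 / (4 * (Real.sin t - 2) ^ 2) -
    Real.sin t / (2 * (Real.sin t - 2))

/-- The mean-centered part `γ̂_η`. -/
noncomputable def gammaEtaHat (η : ℝ) : ℝ → ℝ := fun t =>
  gammaEta η t - (1 / (2 * Real.pi)) * ∫ s in (0:ℝ)..(2 * Real.pi), gammaEta η s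

/-- `φ` is a `2π`-periodic solution of `x' = x² + γ̂_η(t) + μ`. -/
def IsSol (η μ : ℝ) (φ : ℝ → ℝ) : Prop :=
  (∀ t, HasDerivAt φ (φ t ^ 2 + gammaEtaHat η t + μ) t) ∧
    Function.Periodic φ (2 * Real.pi)

open Filter Topology intervalIntegral

theorem abs_exp_sub_one_le_exp_abs_sub_one (x : ℝ) : |exp x - 1| ≤ exp |x| - 1 := by
  rcases le_total 0 x with hx | hx
  · rw [abs_of_nonneg hx, abs_of_nonneg (by linarith [add_one_le_exp x])]
  · rw [abs_of_nonpos hx, abs_of_nonpos (by linarith [exp_le_one_iff.2 hx])]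
    linarith [add_one_le_exp x, add_one_le_exp (-x)]

theorem tendsto_integral_abs_of_tendsto_integral_sq_mul {ι : Type*} {l : Filter ι} {a b : ℝ}
    (hab : a ≤ b) {w : ι → ℝ → ℝ} {ρ : ℝ → ℝ} (hw : ∀ i, Continuous (w i)) (hρ : Continuous ρ)
    (hρ_pos : ∀ t, 0 < ρ t) (h : Tendsto (fun i => ∫ t in a..b, w i t ^ 2 * ρ t) l (𝓝 0)) :
    Tendsto (fun i => ∫ t in a..b, |w i t|) l (𝓝 0) := by
  set K := ∫ t in a..b, (ρ t)⁻¹ with hK_def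
  have hρ_inv : Continuous fun t => (ρ t)⁻¹ := hρ.inv₀ fun t => (hρ_pos t).ne'
  have hK : 0 ≤ K := integral_nonneg hab fun t _ => (inv_pos.2 (hρ_pos t)).le
  have hbound : ∀ c > 0, ∀ i,
      2 * ∫ t in a..b, |w i t| ≤ c * (∫ t in a..b, w i t ^ 2 * ρ t) + K / c := by
    intro c hc i
    have hwi := hw i
    have hsq : Continuous fun t => c * (w i t ^ 2 * ρ t) := by fun_prop
    have hinv : Continuous fun t => (ρ t)⁻¹ / c := hρ_inv.div_const c
    rw [← integral_const_mul, ← integral_const_mul, hK_def, ← integral_div,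
      ← integral_add (hsq.intervalIntegrable _ _) (hinv.intervalIntegrable _ _)]
    refine integral_mono_on hab ((hwi.abs.const_mul 2).intervalIntegrable _ _)
      ((hsq.add hinv).intervalIntegrable _ _) fun t _ => ?_
    have hρt := hρ_pos t
    have hgap : c * (w i t ^ 2 * ρ t) + (ρ t)⁻¹ / c - 2 * |w i t|
        = (c * ρ t * |w i t| - 1) ^ 2 / (c * ρ t) := by
      rw [← sq_abs (w i t)]
      field_simp
      ring
    have : 0 ≤ (c * ρ t * |w i t| - 1) ^ 2 / (c * ρ t) := by positivity
    linarith
  rw [Metric.tendsto_nhds]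
  intro ε hε
  have hc : 0 < K / ε + 1 := by positivity
  filter_upwards [h.eventually (gt_mem_nhds (div_pos hε hc))] with i hi
  have hnonneg : 0 ≤ ∫ t in a..b, |w i t| := integral_nonneg hab fun _ _ => abs_nonneg _
  have hK_lt : K / (K / ε + 1) < ε := by
    rw [div_lt_iff₀ hc]
    nlinarith [div_mul_cancel₀ K hε.ne']
  have hW_lt : (K / ε + 1) * (∫ t in a..b, w i t ^ 2 * ρ t) < ε := by
    rw [lt_div_iff₀ hc] at hi
    linarith
  rw [Real.dist_eq, sub_zero, abs_of_nonneg hnonneg]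
  linarith [hbound _ hc i]

theorem concaveOn_univ_of_le_add_mul {f p : ℝ → ℝ} (h : ∀ x y, f y ≤ f x + p x * (y - x)) :
    ConcaveOn ℝ Set.univ f := by
  refine ⟨convex_univ, fun x _ y _ a b ha hb hab => ?_⟩
  simp only [smul_eq_mul]
  have hx := mul_le_mul_of_nonneg_left (h (a * x + b * y) x) ha
  have hy := mul_le_mul_of_nonneg_left (h (a * x + b * y) y) hb
  linear_combination hx + hy +
    (f (a * x + b * y) - p (a * x + b * y) * (a * x + b * y)) * hab

theorem slope_mem_uIcc_of_le_add_mul {f p : ℝ → ℝ} (h : ∀ x y, f y ≤ f x + p x * (y - x))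
    {x y : ℝ} (hyx : y ≠ x) : slope f x y ∈ Set.uIcc (p x) (p y) := by
  have h₁ := h x y
  have h₂ := h y x
  rw [slope_def_field]
  rcases hyx.lt_or_gt with hyx | hxy
  · exact Set.mem_uIcc_of_le ((le_div_iff_of_neg (sub_neg.2 hyx)).2 (by linarith))
      ((div_le_iff_of_neg (sub_neg.2 hyx)).2 (by linarith))
  · exact Set.mem_uIcc_of_ge ((le_div_iff₀ (sub_pos.2 hxy)).2 (by linarith))
      ((div_le_iff₀ (sub_pos.2 hxy)).2 (by linarith))

theorem hasDerivAt_of_le_add_mul {f p : ℝ → ℝ} {x : ℝ} (h : ∀ x y, f y ≤ f x + p x * (y - x))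
    (hp : ContinuousAt p x) : HasDerivAt f (p x) x := by
  rw [hasDerivAt_iff_tendsto_slope]
  have hp' : Tendsto p (𝓝[≠] x) (𝓝 (p x)) := hp.tendsto.mono_left nhdsWithin_le_nhds
  have hlower := (tendsto_const_nhds (x := p x)).min hp'
  have hupper := (tendsto_const_nhds (x := p x)).max hp'
  rw [min_self] at hlower
  rw [max_self] at hupper
  have hmem : ∀ᶠ y in 𝓝[≠] x, slope f x y ∈ Set.uIcc (p x) (p y) :=
    eventually_nhdsWithin_of_forall fun y hy => slope_mem_uIcc_of_le_add_mul h hy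
  exact tendsto_of_tendsto_of_tendsto_of_le_of_le' hlower hupper (hmem.mono fun _ hy => hy.1)
    (hmem.mono fun _ hy => hy.2)

namespace Riccati

def IsPeriodicSol (T : ℝ) (f φ : ℝ → ℝ) : Prop :=
  (∀ t, HasDerivAt φ (φ t ^ 2 + f t) t) ∧ Function.Periodic φ T

noncomputable def integratingFactor (z : ℝ → ℝ) (t : ℝ) : ℝ :=
  exp (-(2 * ∫ s in (0 : ℝ)..t, z s))

variable {T : ℝ} {f g z φ : ℝ → ℝ}

theorem IsPeriodicSol.continuous (h : IsPeriodicSol T f φ) : Continuous φ :=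
  continuous_iff_continuousAt.2 fun t => (h.1 t).continuousAt

theorem integratingFactor_pos (z : ℝ → ℝ) (t : ℝ) : 0 < integratingFactor z t := exp_pos _

theorem hasDerivAt_integratingFactor (hz : Continuous z) (t : ℝ) :
    HasDerivAt (integratingFactor z) (-(2 * z t) * integratingFactor z t) t :=
  ((hz.integral_hasStrictDerivAt 0 t).hasDerivAt.const_mul 2).neg.exp.congr_deriv
    (mul_comm _ _)

theorem continuous_integratingFactor (hz : Continuous z) : Continuous (integratingFactor z) :=
  continuous_iff_continuousAt.2 fun t => (hasDerivAt_integratingFactor hz t).continuousAt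

theorem integral_integratingFactor_pos (hz : Continuous z) (hT : 0 < T) :
    0 < ∫ t in (0 : ℝ)..T, integratingFactor z t :=
  intervalIntegral_pos_of_pos ((continuous_integratingFactor hz).intervalIntegrable _ _)
    (integratingFactor_pos z) hT

theorem integratingFactor_add_period (hz : Continuous z) (hper : Function.Periodic z T) (t : ℝ) :
    integratingFactor z (t + T) = integratingFactor z T * integratingFactor z t := by
  have h : ∫ s in (0 : ℝ)..t + T, z s = (∫ s in (0 : ℝ)..T, z s) + ∫ s in (0 : ℝ)..t, z s := by
    rw [← integral_add_adjacent_intervals (hz.intervalIntegrable 0 t)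
      (hz.intervalIntegrable t (t + T)), hper.intervalIntegral_add_eq t 0, zero_add, add_comm]
  simp only [integratingFactor, h, ← exp_add]
  ring_nf

theorem integratingFactor_periodic (hz : Continuous z) (hper : Function.Periodic z T)
    (hz0 : ∫ t in (0 : ℝ)..T, z t = 0) : Function.Periodic (integratingFactor z) T := fun t => by
  rw [integratingFactor_add_period hz hper, integratingFactor, hz0]
  simp

theorem integral_inv_integratingFactor_add_period (hz : Continuous z)
    (hper : Function.Periodic z T) (t : ℝ) :
    ∫ s in (0 : ℝ)..t + T, (integratingFactor z s)⁻¹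
      = (∫ s in (0 : ℝ)..T, (integratingFactor z s)⁻¹)
        + (∫ s in (0 : ℝ)..t, (integratingFactor z s)⁻¹) / integratingFactor z T := by
  have hE : Continuous fun s => (integratingFactor z s)⁻¹ :=
    (continuous_integratingFactor hz).inv₀ fun s => (integratingFactor_pos z s).ne'
  rw [← integral_add_adjacent_intervals (hE.intervalIntegrable 0 T)
    (hE.intervalIntegrable T (t + T))]
  congr 1
  have hshift := integral_comp_add_right (a := 0) (b := t) (fun s => (integratingFactor z s)⁻¹) T
  rw [zero_add] at hshift
  rw [← hshift, ← integral_div]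
  congr 1 with s
  rw [integratingFactor_add_period hz hper]
  ring

theorem integratingFactor_mul_sub_integral_ne_zero (hT : 0 < T) (hz : Continuous z) {y₀ : ℝ}
    (hy₀ : y₀ * (integratingFactor z T - 1)
      = integratingFactor z T * ∫ s in (0 : ℝ)..T, (integratingFactor z s)⁻¹)
    {t : ℝ} (ht : t ∈ Set.Icc 0 T) :
    integratingFactor z t * (y₀ - ∫ s in (0 : ℝ)..t, (integratingFactor z s)⁻¹) ≠ 0 := by
  have hE_pos := integratingFactor_pos z
  have hE_inv : Continuous fun s => (integratingFactor z s)⁻¹ :=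
    (continuous_integratingFactor hz).inv₀ fun s => (hE_pos s).ne'
  set B : ℝ → ℝ := fun t => ∫ s in (0 : ℝ)..t, (integratingFactor z s)⁻¹ with hB_def
  have hBt : 0 ≤ B t := integral_nonneg ht.1 fun s _ => (inv_pos.2 (hE_pos s)).le
  have hBt_le : B t ≤ B T := by
    rw [← sub_nonneg, hB_def, integral_interval_sub_left (hE_inv.intervalIntegrable _ _)
      (hE_inv.intervalIntegrable _ _)]
    exact integral_nonneg ht.2 fun s _ => (inv_pos.2 (hE_pos s)).le
  have hBT : 0 < B T := intervalIntegral_pos_of_pos (hE_inv.intervalIntegrable _ _)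
    (fun s => inv_pos.2 (hE_pos s)) hT
  have hsign : 0 < (y₀ - B t) * (integratingFactor z T - 1) := by
    have : (y₀ - B t) * (integratingFactor z T - 1)
        = integratingFactor z T * (B T - B t) + B t := by linear_combination hy₀
    rw [this]
    rcases hBt.lt_or_eq with h | h
    · nlinarith [hE_pos T]
    · rw [← h]; nlinarith [hE_pos T]
  exact mul_ne_zero (hE_pos t).ne' (left_ne_zero_of_mul hsign.ne')

theorem exists_periodic_hasDerivAt_ne_zero (hT : 0 < T) (hz : Continuous z)
    (hper : Function.Periodic z T) (hz0 : ∫ t in (0 : ℝ)..T, z t ≠ 0) :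
    ∃ y : ℝ → ℝ, (∀ t, HasDerivAt y (-(2 * z t) * y t - 1) t) ∧ Function.Periodic y T ∧
      ∀ t, y t ≠ 0 := by
  have hE_ne := fun t => (integratingFactor_pos z t).ne'
  have hc_one : integratingFactor z T - 1 ≠ 0 := by
    simpa [integratingFactor, sub_eq_zero, exp_eq_one_iff] using hz0
  have hE_inv : Continuous fun s => (integratingFactor z s)⁻¹ :=
    (continuous_integratingFactor hz).inv₀ hE_ne
  set B : ℝ → ℝ := fun t => ∫ s in (0 : ℝ)..t, (integratingFactor z s)⁻¹
  have hB_deriv : ∀ t, HasDerivAt B (integratingFactor z t)⁻¹ t := fun t =>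
    (hE_inv.integral_hasStrictDerivAt 0 t).hasDerivAt
  have hB_add : ∀ t, B (t + T) = B T + B t / integratingFactor z T :=
    integral_inv_integratingFactor_add_period hz hper
  -- the solutions of `y' = -2zy - 1` are `integratingFactor z * (y₀ - B)`; pick a periodic one
  obtain ⟨y₀, hy₀⟩ : ∃ y₀, y₀ * (integratingFactor z T - 1) = integratingFactor z T * B T :=
    ⟨_, div_mul_cancel₀ _ hc_one⟩
  have hy_per : Function.Periodic (fun t => integratingFactor z t * (y₀ - B t)) T := fun t => by
    simp only [integratingFactor_add_period hz hper, hB_add]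
    field_simp [hE_ne T]
    linear_combination integratingFactor z t * hy₀
  refine ⟨_, fun t => ?_, hy_per, fun t => ?_⟩
  · refine ((hasDerivAt_integratingFactor hz t).mul ((hB_deriv t).const_sub y₀)).congr_deriv ?_
    field_simp [hE_ne t]
    ring
  · obtain ⟨s, hs, hts⟩ := hy_per.exists_mem_Ico₀ hT t
    rw [hts]
    exact integratingFactor_mul_sub_integral_ne_zero hT hz hy₀ (Set.Ico_subset_Icc_self hs)

theorem IsPeriodicSol.add_inv {y : ℝ → ℝ} (hz : IsPeriodicSol T f z)
    (hy : ∀ t, HasDerivAt y (-(2 * z t) * y t - 1) t) (hy_per : Function.Periodic y T)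
    (hy0 : ∀ t, y t ≠ 0) : IsPeriodicSol T f fun t => z t + (y t)⁻¹ := by
  refine ⟨fun t => ?_, fun t => by simp only [hz.2 t, hy_per t]⟩
  refine ((hz.1 t).add ((hy t).inv (hy0 t))).congr_deriv ?_
  field_simp [hy0 t]
  ring

theorem IsPeriodicSol.integral_eq_zero_of_unique (hT : 0 < T) (hz : IsPeriodicSol T f z)
    (huniq : ∀ φ, IsPeriodicSol T f φ → φ = z) : ∫ t in (0 : ℝ)..T, z t = 0 := by
  by_contra hz0
  obtain ⟨y, hy, hy_per, hy0⟩ := exists_periodic_hasDerivAt_ne_zero hT hz.continuous hz.2 hz0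
  have := congr_fun (huniq _ (hz.add_inv hy hy_per hy0)) 0
  exact hy0 0 (by simpa using this)

theorem IsPeriodicSol.integral_sq_mul_integratingFactor (hf : Continuous f) (hg : Continuous g)
    (hz : IsPeriodicSol T f z) (hz0 : ∫ t in (0 : ℝ)..T, z t = 0) (hφ : IsPeriodicSol T g φ) :
    ∫ t in (0 : ℝ)..T, (φ t - z t) ^ 2 * integratingFactor z t
      = -∫ t in (0 : ℝ)..T, (g t - f t) * integratingFactor z t := by
  have hE := continuous_integratingFactor hz.continuous
  have hw := hφ.continuous.sub hz.continuous
  have hF : ∀ t, HasDerivAt (fun t => (φ t - z t) * integratingFactor z t)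
      ((φ t - z t) ^ 2 * integratingFactor z t + (g t - f t) * integratingFactor z t) t :=
    fun t => by
      refine (((hφ.1 t).sub (hz.1 t)).mul
        (hasDerivAt_integratingFactor hz.continuous t)).congr_deriv ?_
      simp only [Pi.sub_apply]
      ring
  have hF_per : (φ T - z T) * integratingFactor z T = (φ 0 - z 0) * integratingFactor z 0 := by
    have hE_per := integratingFactor_periodic hz.continuous hz.2 hz0 0
    have hφ_per := hφ.2 0
    have hz_per := hz.2 0
    rw [zero_add] at hE_per hφ_per hz_per
    rw [hE_per, hφ_per, hz_per]
  have hsq : Continuous fun t => (φ t - z t) ^ 2 * integratingFactor z t := (hw.pow 2).mul hE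
  have hlin : Continuous fun t => (g t - f t) * integratingFactor z t := (hg.sub hf).mul hE
  have hFTC := integral_eq_sub_of_hasDerivAt (fun t _ => hF t)
    ((hsq.add hlin).intervalIntegrable 0 T)
  rw [integral_add (hsq.intervalIntegrable _ _) (hlin.intervalIntegrable _ _), hF_per,
    sub_self] at hFTC
  linarith

theorem abs_integratingFactor_sub_le {z' : ℝ → ℝ} (hz : Continuous z) (hz' : Continuous z')
    {t : ℝ} (ht : t ∈ Set.Icc 0 T) :
    |integratingFactor z' t - integratingFactor z t|
      ≤ (exp (2 * ∫ s in (0 : ℝ)..T, |z' s - z s|) - 1) * integratingFactor z t := by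
  have hdiff : ∫ s in (0 : ℝ)..t, (z' s - z s)
      = (∫ s in (0 : ℝ)..t, z' s) - ∫ s in (0 : ℝ)..t, z s :=
    integral_sub (hz'.intervalIntegrable 0 t) (hz.intervalIntegrable 0 t)
  have hsplit : integratingFactor z' t
      = integratingFactor z t * exp (-(2 * ∫ s in (0 : ℝ)..t, (z' s - z s))) := by
    rw [integratingFactor, integratingFactor, ← exp_add, hdiff]
    ring_nf
  have hbound : |-(2 * ∫ s in (0 : ℝ)..t, (z' s - z s))| ≤ 2 * ∫ s in (0 : ℝ)..T, |z' s - z s| := by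
    rw [abs_neg, abs_mul, abs_two]
    gcongr
    calc _ ≤ ∫ s in (0 : ℝ)..t, |z' s - z s| := abs_integral_le_integral_abs ht.1
      _ ≤ _ := integral_mono_interval le_rfl ht.1 ht.2
          (MeasureTheory.ae_of_all _ fun _ => abs_nonneg _)
          ((hz'.sub hz).abs.intervalIntegrable _ _)
  rw [hsplit, ← mul_sub_one, abs_mul, abs_of_pos (integratingFactor_pos z t), mul_comm]
  exact mul_le_mul_of_nonneg_right ((abs_exp_sub_one_le_exp_abs_sub_one _).trans (by gcongr))
    (integratingFactor_pos z t).le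

theorem tendsto_integral_mul_integratingFactor {ι : Type*} {l : Filter ι} {z : ι → ℝ → ℝ}
    {z₀ g : ℝ → ℝ} (hT : 0 ≤ T) (hz : ∀ i, Continuous (z i)) (hz₀ : Continuous z₀)
    (hg : Continuous g) (h : Tendsto (fun i => ∫ t in (0 : ℝ)..T, |z i t - z₀ t|) l (𝓝 0)) :
    Tendsto (fun i => ∫ t in (0 : ℝ)..T, g t * integratingFactor (z i) t) l
      (𝓝 (∫ t in (0 : ℝ)..T, g t * integratingFactor z₀ t)) := by
  set C := ∫ t in (0 : ℝ)..T, |g t| * integratingFactor z₀ t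
  have hE₀ := continuous_integratingFactor hz₀
  have hbound : ∀ i, |(∫ t in (0 : ℝ)..T, g t * integratingFactor (z i) t)
      - ∫ t in (0 : ℝ)..T, g t * integratingFactor z₀ t|
      ≤ (exp (2 * ∫ t in (0 : ℝ)..T, |z i t - z₀ t|) - 1) * C := fun i => by
    have hgEi : Continuous fun t => g t * integratingFactor (z i) t :=
      hg.mul (continuous_integratingFactor (hz i))
    have hgE₀ : Continuous fun t => g t * integratingFactor z₀ t := hg.mul hE₀
    have hbd : Continuous fun t => (exp (2 * ∫ t in (0 : ℝ)..T, |z i t - z₀ t|) - 1) *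
        (|g t| * integratingFactor z₀ t) := (hg.abs.mul hE₀).const_mul _
    rw [← integral_sub (hgEi.intervalIntegrable _ _) (hgE₀.intervalIntegrable _ _),
      ← integral_const_mul]
    refine (abs_integral_le_integral_abs hT).trans (integral_mono_on hT
      ((hgEi.sub hgE₀).abs.intervalIntegrable _ _) (hbd.intervalIntegrable _ _) fun t ht => ?_)
    rw [← mul_sub, abs_mul, mul_left_comm]
    gcongr
    exact abs_integratingFactor_sub_le hz₀ (hz i) ht
  have hlim : Tendsto (fun i => (exp (2 * ∫ t in (0 : ℝ)..T, |z i t - z₀ t|) - 1) * C) l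
      (𝓝 0) := by
    have h2 : Tendsto (fun i => 2 * ∫ t in (0 : ℝ)..T, |z i t - z₀ t|) l (𝓝 0) := by
      simpa using h.const_mul 2
    simpa using (((continuous_exp.tendsto 0).comp h2).sub_const 1).mul_const C
  rw [tendsto_iff_norm_sub_tendsto_zero]
  exact squeeze_zero (fun _ => norm_nonneg _) hbound hlim

end Riccati

open Riccati

theorem continuous_gammaEta (η : ℝ) : Continuous (gammaEta η) := by
  have h : ∀ t, sin t - 2 ≠ 0 := fun t => by linarith [sin_le_one t]
  unfold gammaEta
  fun_prop (disch := simp [h])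

theorem gammaEtaHat_eq_add_mul_sin (η t : ℝ) : gammaEtaHat η t = gammaEtaHat 0 t + η * sin t := by
  have hγ : ∀ s, gammaEta η s = gammaEta 0 s + η * (sin s - 2) := fun s => by
    simp only [gammaEta]; ring
  have hint : ∫ s in (0 : ℝ)..2 * π, gammaEta η s
      = (∫ s in (0 : ℝ)..2 * π, gammaEta 0 s) - 4 * π * η := by
    simp only [hγ]
    rw [integral_add ((continuous_gammaEta 0).intervalIntegrable _ _)
      ((by fun_prop : Continuous fun s => η * (sin s - 2)).intervalIntegrable _ _),
      integral_const_mul, integral_sub intervalIntegrable_sin intervalIntegrable_const,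
      integral_sin, integral_const]
    simp
    ring
  rw [gammaEtaHat, gammaEtaHat, hint, hγ t]
  field_simp
  ring

theorem continuous_gammaEtaHat (η : ℝ) : Continuous (gammaEtaHat η) :=
  (continuous_gammaEta η).sub continuous_const

theorem isSol_iff {η μ : ℝ} {φ : ℝ → ℝ} :
    IsSol η μ φ ↔ IsPeriodicSol (2 * π) (fun t => gammaEtaHat η t + μ) φ := by
  simp only [IsSol, IsPeriodicSol, add_assoc]

noncomputable def tangentSlope (z : ℝ → ℝ) : ℝ :=
  -(∫ t in (0 : ℝ)..2 * π, sin t * integratingFactor z t) /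
    ∫ t in (0 : ℝ)..2 * π, integratingFactor z t

theorem IsSol.integral_sq_mul_integratingFactor {η ν η' μ : ℝ} {z φ : ℝ → ℝ} (hz : IsSol η ν z)
    (hz0 : ∫ t in (0 : ℝ)..2 * π, z t = 0) (hφ : IsSol η' μ φ) :
    ∫ t in (0 : ℝ)..2 * π, (φ t - z t) ^ 2 * integratingFactor z t
      = (∫ t in (0 : ℝ)..2 * π, integratingFactor z t) * (ν + tangentSlope z * (η' - η) - μ) := by
  have hz' := isSol_iff.1 hz
  have hE := continuous_integratingFactor hz'.continuous
  have hEpos := integral_integratingFactor_pos hz'.continuous two_pi_pos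
  have hf : Continuous fun t => gammaEtaHat η t + ν :=
    (continuous_gammaEtaHat η).add continuous_const
  have hg : Continuous fun t => gammaEtaHat η' t + μ :=
    (continuous_gammaEtaHat η').add continuous_const
  rw [hz'.integral_sq_mul_integratingFactor hf hg hz0 (isSol_iff.1 hφ)]
  have hdiff : ∀ t, (gammaEtaHat η' t + μ - (gammaEtaHat η t + ν)) * integratingFactor z t
      = (η' - η) * (sin t * integratingFactor z t) + (μ - ν) * integratingFactor z t := fun t => by
    rw [gammaEtaHat_eq_add_mul_sin η', gammaEtaHat_eq_add_mul_sin η]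
    ring
  simp only [hdiff]
  have hS : Continuous fun t => (η' - η) * (sin t * integratingFactor z t) := by fun_prop
  have hE' : Continuous fun t => (μ - ν) * integratingFactor z t := by fun_prop
  rw [integral_add (hS.intervalIntegrable _ _) (hE'.intervalIntegrable _ _), integral_const_mul,
    integral_const_mul, tangentSlope]
  field_simp
  ring

theorem IsSol.le_add_tangentSlope_mul {η ν η' μ : ℝ} {z φ : ℝ → ℝ} (hz : IsSol η ν z)
    (hz0 : ∫ t in (0 : ℝ)..2 * π, z t = 0) (hφ : IsSol η' μ φ) :
    μ ≤ ν + tangentSlope z * (η' - η) := by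
  have hsq : 0 ≤ ∫ t in (0 : ℝ)..2 * π, (φ t - z t) ^ 2 * integratingFactor z t :=
    integral_nonneg two_pi_pos.le fun t _ => mul_nonneg (sq_nonneg _) (integratingFactor_pos z t).le
  rw [hz.integral_sq_mul_integratingFactor hz0 hφ] at hsq
  linarith [nonneg_of_mul_nonneg_right hsq
    (integral_integratingFactor_pos (isSol_iff.1 hz).continuous two_pi_pos)]

theorem continuous_tangentSlope {ν : ℝ → ℝ} {z : ℝ → ℝ → ℝ} (hν : Continuous ν)
    (hz : ∀ η, IsSol η (ν η) (z η)) (hz0 : ∀ η, ∫ t in (0 : ℝ)..2 * π, z η t = 0) :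
    Continuous fun η => tangentSlope (z η) := by
  have hzc : ∀ η, Continuous (z η) := fun η => (isSol_iff.1 (hz η)).continuous
  refine continuous_iff_continuousAt.2 fun η => ?_
  -- the weighted `L²` distance from `z η` is the gap below the tangent line at `η`
  have hgap : Tendsto
      (fun η' => ∫ t in (0 : ℝ)..2 * π, (z η' t - z η t) ^ 2 * integratingFactor (z η) t)
      (𝓝 η) (𝓝 0) := by
    simp only [(hz η).integral_sq_mul_integratingFactor (hz0 η) (hz _)]
    have : Continuous fun η' => (∫ t in (0 : ℝ)..2 * π, integratingFactor (z η) t) *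
        (ν η + tangentSlope (z η) * (η' - η) - ν η') := by fun_prop
    simpa using this.tendsto η
  have hL1 := tendsto_integral_abs_of_tendsto_integral_sq_mul two_pi_pos.le
    (fun η' => (hzc η').sub (hzc η)) (continuous_integratingFactor (hzc η))
    (integratingFactor_pos _) hgap
  have hS := tendsto_integral_mul_integratingFactor two_pi_pos.le hzc (hzc η) continuous_sin hL1
  have hE := tendsto_integral_mul_integratingFactor two_pi_pos.le hzc (hzc η)
    continuous_const (g := fun _ => 1) hL1
  simp only [one_mul] at hE
  exact hS.neg.div hE (integral_integratingFactor_pos (hzc η) two_pi_pos).ne'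

theorem stmt_17_general (μs : ℝ → ℝ)
    -- μ*(η) is the unique value of μ at which there is exactly one 2π-periodic solution
    (hchar : ∀ η μ : ℝ, (∃! φ : ℝ → ℝ, IsSol η μ φ) ↔ μ = μs η)
    -- two 2π-periodic solutions when μ < μ*(η)
    (htwo : ∀ η : ℝ, ∀ μ < μs η, ∃ φ ψ : ℝ → ℝ, φ ≠ ψ ∧ IsSol η μ φ ∧ IsSol η μ ψ) :
    Differentiable ℝ μs ∧ ConcaveOn ℝ Set.univ μs := by
  choose z hz huniq using fun η => (hchar η (μs η)).2 rfl
  have hz0 : ∀ η, ∫ t in (0 : ℝ)..2 * π, z η t = 0 := fun η =>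
    (isSol_iff.1 (hz η)).integral_eq_zero_of_unique two_pi_pos fun φ hφ =>
      huniq η φ (isSol_iff.2 hφ)
  have hsupp : ∀ η η', μs η' ≤ μs η + tangentSlope (z η) * (η' - η) := fun η η' =>
    le_of_forall_lt_imp_le_of_dense fun μ hμ => by
      obtain ⟨φ, -, -, hφ, -⟩ := htwo η' μ hμ
      exact (hz η).le_add_tangentSlope_mul (hz0 η) hφ
  have hconc := concaveOn_univ_of_le_add_mul hsupp
  have hp := continuous_tangentSlope
    (continuousOn_univ.1 (hconc.continuousOn isOpen_univ)) hz hz0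
  exact ⟨fun η => (hasDerivAt_of_le_add_mul hsupp hp.continuousAt).differentiableAt, hconc⟩

theorem stmt_17 (μs : ℝ → ℝ)
    -- μ*(η) is the unique value of μ at which there is exactly one 2π-periodic solution
    (hchar : ∀ η μ : ℝ, (∃! φ : ℝ → ℝ, IsSol η μ φ) ↔ μ = μs η)
    -- two 2π-periodic solutions when μ < μ*(η)
    (htwo : ∀ η : ℝ, ∀ μ < μs η, ∃ φ ψ : ℝ → ℝ, φ ≠ ψ ∧ IsSol η μ φ ∧ IsSol η μ ψ)
    -- none when μ > μ*(η)
    (hnone : ∀ η : ℝ, ∀ μ > μs η, ¬ ∃ φ : ℝ → ℝ, IsSol η μ φ) :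
    Differentiable ℝ μs ∧ ConcaveOn ℝ Set.univ μs :=
  stmt_17_general μs hchar htwo
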